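/- arXiv:1903.07065 — 3 statements merged into one kernel-verified Lean document; each statement's English description precedes it below -/
import Mathlib

section
/- Let M be a compact, connected Riemannian manifold without boundary, and let (X_t)_t be a continuous flow on M such that: (1) (X_t)_t has at most finitely many equilibrium points; (2) the set of periodic points of (X_t)_t is dense in M; (3) (X_t)_t is transitive; and (4) for every T > 0 the set of periodic orbits of period smaller than T forms a subset of M consisting of finitely many disjoint closed curves. Then the C^0-centralizer of (X_t)_t is trivial: for every continuous flow (Y_s)_s commuting with (X_t)_t there exists c ∈ ℝ such that Y_t = X_{ct} for every t ∈ ℝ. -/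
open Set Filter Topology Metric

noncomputable section

variable {M : Type*} [MetricSpace M]

/-- A (global, jointly continuous) flow on `M`. -/
def IsFlow (φ : ℝ → M → M) : Prop :=
  Continuous (fun p : ℝ × M => φ p.1 p.2) ∧ (∀ x, φ 0 x = x) ∧
    ∀ s t x, φ (s + t) x = φ s (φ t x)

/-- Two flows commute: `Y_s ∘ X_t = X_t ∘ Y_s` for all `s, t`. -/
def FlowsCommute (φ ψ : ℝ → M → M) : Prop :=
  ∀ (s t : ℝ) (x : M), ψ s (φ t x) = φ t (ψ s x)

/-- The orbit of a point under a flow. -/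
def flowOrbit (φ : ℝ → M → M) (p : M) : Set M := range fun t => φ t p

/-- An equilibrium point of a flow. -/
def IsEquilibrium (φ : ℝ → M → M) (p : M) : Prop := ∀ t, φ t p = p

/-- A periodic (non-equilibrium) point of a flow. -/
def IsPeriodicPoint (φ : ℝ → M → M) (p : M) : Prop :=
  (∃ T > 0, φ T p = p) ∧ ¬ IsEquilibrium φ p

/-- The flow is (topologically) transitive: some point has dense forward orbit. -/
def IsTransitiveFlow (φ : ℝ → M → M) : Prop :=
  ∃ x : M, Dense {y | ∃ t : ℝ, 0 ≤ t ∧ φ t x = y}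

/-- For every `T > 0`, the set of periodic orbits of period smaller than `T` consists of
finitely many (disjoint) closed curves, i.e. of finitely many periodic orbits. -/
def FinitelyManyShortPeriodicOrbits (φ : ℝ → M → M) : Prop :=
  ∀ T : ℝ, 0 < T → ∃ F : Set M, F.Finite ∧
    ∀ p : M, IsPeriodicPoint φ p → (∃ s : ℝ, 0 < s ∧ s < T ∧ φ s p = p) →
      ∃ q ∈ F, flowOrbit φ p = flowOrbit φ q

/-! Let `p` be periodic of minimal period `T`. Its orbit is an embedded circle `ℝ ⧸ Tℤ`. The curve
`s ↦ ψ s p` is connected and runs in the set of `T`-periodic non-equilibrium points, which is a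
finite disjoint union of closed orbits, so it stays in the orbit of `p`; read in `ℝ ⧸ Tℤ` it is a
continuous homomorphism, and lifting it to `ℝ` gives `ψ s p = φ (c * s) p`. Approximate a point `x`
with dense forward orbit by periodic points `pₙ`: if the constants `cₙ` went to infinity, `x` would
be an equilibrium, so a limit `c` of a subsequence gives `ψ s x = φ (c * s) x`, and this identity
spreads from `x` to the closure of its forward orbit, which is `M`. -/

lemma AddCircle.exists_eq_coe_mul_of_continuous_add {T : ℝ} {g : ℝ → AddCircle T}
    (hg : Continuous g) (hadd : ∀ a b, g (a + b) = g a + g b) :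
    ∃ c : ℝ, ∀ s, g s = ((c * s : ℝ) : AddCircle T) := by
  have hg0 : g 0 = 0 := by simpa using hadd 0 0
  obtain ⟨G, ⟨-, hGg⟩, hG_unique⟩ :=
    (isCoveringMap_coe T).existsUnique_continuousMap_lifts ⟨g, hg⟩ 0 0 (by simp [hg0])
  have hGg' : ∀ s, ((G s : ℝ) : AddCircle T) = g s := fun s => congrFun hGg s
  -- `b ↦ G (a + b) - G a` is another lift of `g` vanishing at `0`, hence equal to `G`
  have hG_add : ∀ a b, G (a + b) = G a + G b := by
    intro a b
    have h := hG_unique ⟨fun b => G (a + b) - G a, by fun_prop⟩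
      ⟨by simp, funext fun b => by simp [hGg', hadd]⟩
    have := DFunLike.congr_fun h b
    simp only [ContinuousMap.coe_mk] at this
    linarith
  refine ⟨G 1, fun s => ?_⟩
  have hlin := map_real_smul (AddMonoidHom.mk' G hG_add) G.continuous s 1
  simp only [AddMonoidHom.mk'_apply, smul_eq_mul, mul_one] at hlin
  rw [← hGg', hlin, mul_comm]

lemma not_isEquilibrium_of_dense {X : Type*} [TopologicalSpace X] [T1Space X]
    {φ : ℝ → X → X} {x p : X}
    (hx : Dense {y | ∃ t, 0 ≤ t ∧ φ t x = y}) (hp : IsPeriodicPoint φ p) :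
    ¬ IsEquilibrium φ x := by
  intro hxe
  have hdense : Dense ({x} : Set X) := hx.mono (by rintro _ ⟨t, -, rfl⟩; exact hxe t)
  have hpx : p = x := by simpa only [closure_singleton, mem_singleton_iff] using hdense p
  exact hp.2 (hpx ▸ hxe)

namespace IsFlow

variable {φ : ℝ → M → M}

lemma continuous_apply_left (hφ : IsFlow φ) (x : M) : Continuous fun t => φ t x :=
  hφ.1.comp (continuous_id.prodMk continuous_const)

lemma continuous_apply_right (hφ : IsFlow φ) (t : ℝ) : Continuous (φ t) :=
  hφ.1.comp (continuous_const.prodMk continuous_id)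

lemma neg_apply_apply (hφ : IsFlow φ) (t : ℝ) (x : M) : φ (-t) (φ t x) = x := by
  rw [← hφ.2.2, neg_add_cancel, hφ.2.1]

lemma apply_comm (hφ : IsFlow φ) (s t : ℝ) (x : M) : φ s (φ t x) = φ t (φ s x) := by
  rw [← hφ.2.2, add_comm, hφ.2.2]

def periods (hφ : IsFlow φ) (p : M) : AddSubgroup ℝ where
  carrier := {t | φ t p = p}
  zero_mem' := hφ.2.1 p
  add_mem' {a b} (ha : φ a p = p) (hb : φ b p = p) := show φ (a + b) p = p by
    rw [hφ.2.2, hb, ha]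
  neg_mem' {a} (ha : φ a p = p) := show φ (-a) p = p by
    conv_lhs => rw [← ha]
    exact hφ.neg_apply_apply a p

@[simp]
lemma mem_periods (hφ : IsFlow φ) {p : M} {t : ℝ} : t ∈ hφ.periods p ↔ φ t p = p := Iff.rfl

lemma isClosed_periods (hφ : IsFlow φ) (p : M) : IsClosed (hφ.periods p : Set ℝ) :=
  isClosed_eq (hφ.continuous_apply_left p) continuous_const

lemma exists_periods_eq_zmultiples (hφ : IsFlow φ) {p : M} (hp : IsPeriodicPoint φ p) :
    ∃ T > 0, hφ.periods p = AddSubgroup.zmultiples T := by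
  obtain ⟨T, hT, hTp⟩ := hp.1
  rcases AddSubgroup.dense_or_cyclic (hφ.periods p) with hdense | ⟨a, ha⟩
  · have huniv : (hφ.periods p : Set ℝ) = univ := by
      rw [← (hφ.isClosed_periods p).closure_eq, hdense.closure_eq]
    exact absurd (fun t => (huniv ▸ mem_univ t : t ∈ (hφ.periods p : Set ℝ))) hp.2
  · rw [← AddSubgroup.zmultiples_eq_closure] at ha
    have ha0 : a ≠ 0 := by
      rintro rfl
      have : T ∈ hφ.periods p := hTp
      simp only [ha, AddSubgroup.zmultiples_zero_eq_bot, AddSubgroup.mem_bot] at this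
      exact hT.ne' this
    rcases ha0.lt_or_gt with hneg | hpos
    · exact ⟨-a, neg_pos.2 hneg, by rw [ha, AddSubgroup.zmultiples_neg]⟩
    · exact ⟨a, hpos, ha⟩

lemma mem_flowOrbit_self (hφ : IsFlow φ) (p : M) : p ∈ flowOrbit φ p := ⟨0, hφ.2.1 p⟩

lemma flowOrbit_eq_of_mem (hφ : IsFlow φ) {x y : M} (h : y ∈ flowOrbit φ x) :
    flowOrbit φ y = flowOrbit φ x := by
  obtain ⟨a, rfl⟩ := h
  ext z
  constructor
  · rintro ⟨t, rfl⟩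
    exact ⟨t + a, hφ.2.2 t a x⟩
  · rintro ⟨t, rfl⟩
    exact ⟨t - a, show φ (t - a) (φ a x) = φ t x by rw [← hφ.2.2, sub_add_cancel]⟩

lemma pairwiseDisjoint_flowOrbit (hφ : IsFlow φ) :
    (range (flowOrbit φ)).PairwiseDisjoint id := by
  rintro _ ⟨x, rfl⟩ _ ⟨y, rfl⟩ hne
  refine disjoint_left.2 fun z hzx hzy => hne ?_
  exact (hφ.flowOrbit_eq_of_mem hzx).symm.trans (hφ.flowOrbit_eq_of_mem hzy)

def orbitMap (hφ : IsFlow φ) {T : ℝ} {p : M} (hT : T ∈ hφ.periods p) : AddCircle T → M :=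
  fun v => Quotient.liftOn' v (fun t => φ t p) fun a b hab => by
    have hper : -a + b ∈ hφ.periods p :=
      AddSubgroup.zmultiples_le.2 hT (QuotientAddGroup.leftRel_apply.1 hab)
    change φ a p = φ b p
    conv_lhs => rw [← hper, ← hφ.2.2, add_neg_cancel_left]

section orbitMap

variable (hφ : IsFlow φ) {T : ℝ} {p : M} (hT : T ∈ hφ.periods p)

@[simp]
lemma orbitMap_coe (t : ℝ) : hφ.orbitMap hT t = φ t p := rfl

lemma continuous_orbitMap : Continuous (hφ.orbitMap hT) :=
  (hφ.continuous_apply_left p).quotient_liftOn' _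

lemma orbitMap_coe_add (t : ℝ) (v : AddCircle T) :
    hφ.orbitMap hT (t + v) = φ t (hφ.orbitMap hT v) := by
  induction v using QuotientAddGroup.induction_on with
  | H s => rw [← AddCircle.coe_add, orbitMap_coe, orbitMap_coe, hφ.2.2]

lemma range_orbitMap : range (hφ.orbitMap hT) = flowOrbit φ p := by
  rw [← QuotientAddGroup.mk_surjective.range_comp]
  rfl

lemma injective_orbitMap (hper : hφ.periods p = AddSubgroup.zmultiples T) :
    Function.Injective (hφ.orbitMap hT) := by
  intro v w hvw
  induction v using QuotientAddGroup.induction_on with | H a =>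
  induction w using QuotientAddGroup.induction_on with | H b =>
  refine QuotientAddGroup.eq.2 (hper ▸ ?_)
  rw [mem_periods, hφ.2.2]
  simp only [orbitMap_coe] at hvw
  rw [← hvw, hφ.neg_apply_apply]

lemma isClosedEmbedding_orbitMap (hT₀ : 0 < T)
    (hper : hφ.periods p = AddSubgroup.zmultiples T) : IsClosedEmbedding (hφ.orbitMap hT) := by
  have : Fact (0 < T) := ⟨hT₀⟩
  exact (hφ.continuous_orbitMap hT).isClosedEmbedding (hφ.injective_orbitMap hT hper)

end orbitMap

lemma isCompact_flowOrbit (hφ : IsFlow φ) {T : ℝ} {p : M} (hT₀ : 0 < T) (hT : φ T p = p) :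
    IsCompact (flowOrbit φ p) := by
  have : Fact (0 < T) := ⟨hT₀⟩
  exact hφ.range_orbitMap (T := T) hT ▸ isCompact_range (hφ.continuous_orbitMap hT)

end IsFlow

lemma IsPreconnected.subset_of_subset_sUnion_of_pairwiseDisjoint {X : Type*}
    [TopologicalSpace X] {s : Set X} {𝒪 : Set (Set X)} (hs : IsPreconnected s)
    (hfin : 𝒪.Finite) (hclosed : ∀ O ∈ 𝒪, IsClosed O) (hdisj : 𝒪.PairwiseDisjoint id)
    (hsub : s ⊆ ⋃₀ 𝒪) {O : Set X} (hO : O ∈ 𝒪) {x : X} (hxs : x ∈ s) (hxO : x ∈ O) :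
    s ⊆ O := by
  have hrest : Disjoint O (⋃₀ (𝒪 \ {O})) :=
    disjoint_sUnion_right.2 fun O' hO' => hdisj hO hO'.1 (Ne.symm hO'.2)
  have hcover : s ⊆ O ∪ ⋃₀ (𝒪 \ {O}) := by
    rw [← sUnion_insert, insert_sdiff_singleton, insert_eq_of_mem hO]
    exact hsub
  have hrest_closed : IsClosed (⋃₀ (𝒪 \ {O})) := by
    rw [sUnion_eq_biUnion]
    exact hfin.sdiff.isClosed_biUnion fun O' hO' => hclosed O' hO'.1
  refine ((isPreconnected_iff_subset_of_disjoint_closed.1 hs) O _ (hclosed O hO)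
    hrest_closed hcover ?_).resolve_right ?_
  · rw [hrest.inter_eq, inter_empty]
  · exact fun h => hrest.notMem_of_mem_left hxO (h hxs)

lemma FinitelyManyShortPeriodicOrbits.finite_image_flowOrbit {X : Type*} {φ : ℝ → X → X}
    (hfin : FinitelyManyShortPeriodicOrbits φ) {T : ℝ} (hT : 0 < T) :
    (flowOrbit φ '' {y | φ T y = y ∧ ¬ IsEquilibrium φ y}).Finite := by
  obtain ⟨F, hF, hFs⟩ := hfin (T + 1) (by linarith)
  refine (hF.image (flowOrbit φ)).subset ?_
  rintro _ ⟨y, ⟨hTy, hy⟩, rfl⟩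
  obtain ⟨q, hq, hyq⟩ := hFs y ⟨⟨T, hT, hTy⟩, hy⟩ ⟨T, hT, by linarith, hTy⟩
  exact ⟨q, hq, hyq.symm⟩

namespace FlowsCommute

variable {φ ψ : ℝ → M → M}

lemma isEquilibrium_of_apply (hψ : IsFlow ψ) (hcomm : FlowsCommute φ ψ) {s : ℝ} {y : M}
    (h : IsEquilibrium φ (ψ s y)) : IsEquilibrium φ y := fun t => by
  rw [← hψ.neg_apply_apply s (φ t y), hcomm, h, hψ.neg_apply_apply]

lemma apply_mem_flowOrbit (hφ : IsFlow φ) (hψ : IsFlow ψ) (hcomm : FlowsCommute φ ψ)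
    (hfin : FinitelyManyShortPeriodicOrbits φ) {p : M} (hp : IsPeriodicPoint φ p) (s : ℝ) :
    ψ s p ∈ flowOrbit φ p := by
  obtain ⟨T, hT, hTp⟩ := hp.1
  set S := {y | φ T y = y ∧ ¬ IsEquilibrium φ y}
  have hψS : ∀ s, ψ s p ∈ S := fun s =>
    ⟨by rw [← hcomm, hTp], fun h => hp.2 (isEquilibrium_of_apply hψ hcomm h)⟩
  have hconn := isPreconnected_range (hψ.continuous_apply_left p)
  refine hconn.subset_of_subset_sUnion_of_pairwiseDisjoint (hfin.finite_image_flowOrbit hT) ?_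
    (hφ.pairwiseDisjoint_flowOrbit.subset (image_subset_range _ _)) ?_ ⟨p, ⟨hTp, hp.2⟩, rfl⟩
    ⟨0, hψ.2.1 p⟩ (hφ.mem_flowOrbit_self p) ⟨s, rfl⟩
  · rintro _ ⟨y, hy, rfl⟩
    exact (hφ.isCompact_flowOrbit hT hy.1).isClosed
  · rintro _ ⟨s, rfl⟩
    exact ⟨_, mem_image_of_mem _ (hψS s), hφ.mem_flowOrbit_self _⟩

lemma exists_apply_eq_flow_mul_of_isPeriodicPoint (hφ : IsFlow φ) (hψ : IsFlow ψ)
    (hcomm : FlowsCommute φ ψ) (hfin : FinitelyManyShortPeriodicOrbits φ) {p : M}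
    (hp : IsPeriodicPoint φ p) : ∃ c : ℝ, ∀ s, ψ s p = φ (c * s) p := by
  obtain ⟨T, hT, hper⟩ := hφ.exists_periods_eq_zmultiples hp
  have hTp : T ∈ hφ.periods p := hper ▸ AddSubgroup.mem_zmultiples T
  have hemb := hφ.isClosedEmbedding_orbitMap hTp hT hper
  have hlift : ∀ s, ∃ v, hφ.orbitMap hTp v = ψ s p := fun s => by
    rw [← mem_range, hφ.range_orbitMap]
    exact apply_mem_flowOrbit hφ hψ hcomm hfin hp s
  choose g hg using hlift
  have hg_cont : Continuous g :=
    hemb.continuous_iff.2 (by simpa only [Function.comp_def, hg] using hψ.continuous_apply_left p)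
  have hg_add : ∀ a b, g (a + b) = g a + g b := fun a b => by
    obtain ⟨w, hw⟩ := QuotientAddGroup.mk_surjective (g b)
    apply hemb.injective
    calc hφ.orbitMap hTp (g (a + b)) = ψ a (φ w p) := by
          rw [hg, hψ.2.2, ← hg b, ← hw, hφ.orbitMap_coe]
      _ = φ w (ψ a p) := hcomm a w p
      _ = hφ.orbitMap hTp (g a + g b) := by rw [← hg a, ← hw, add_comm, hφ.orbitMap_coe_add]
  obtain ⟨c, hc⟩ := AddCircle.exists_eq_coe_mul_of_continuous_add hg_cont hg_add
  exact ⟨c, fun s => by rw [← hg, hc, hφ.orbitMap_coe]⟩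

lemma apply_eq_flow_mul_of_dense (hφ : IsFlow φ) (hψ : IsFlow ψ) (hcomm : FlowsCommute φ ψ)
    {x : M} (hx : Dense {y | ∃ t, 0 ≤ t ∧ φ t x = y}) {c : ℝ}
    (h : ∀ s, ψ s x = φ (c * s) x) (s : ℝ) (y : M) : ψ s y = φ (c * s) y := by
  have hclosed : IsClosed {y | ∀ s, ψ s y = φ (c * s) y} := by
    simp only [ofPred_forall]
    exact isClosed_iInter fun s =>
      isClosed_eq (hψ.continuous_apply_right s) (hφ.continuous_apply_right _)
  have horbit : {y | ∃ t, 0 ≤ t ∧ φ t x = y} ⊆ {y | ∀ s, ψ s y = φ (c * s) y} := by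
    rintro _ ⟨t, -, rfl⟩ s
    rw [hcomm, h, hφ.apply_comm]
  exact closure_minimal horbit hclosed (hx y) s

end FlowsCommute

section Limits

variable {φ ψ : ℝ → M → M} {x : M}

lemma apply_eq_flow_mul_of_tendsto (hφ : IsFlow φ) (hψ : IsFlow ψ) {ι : Type*} {l : Filter ι}
    [l.NeBot] {P : ι → M} {c : ι → ℝ} {c₀ : ℝ} (hP : Tendsto P l (𝓝 x))
    (hc : Tendsto c l (𝓝 c₀)) (h : ∀ i s, ψ s (P i) = φ (c i * s) (P i)) (s : ℝ) :
    ψ s x = φ (c₀ * s) x := by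
  refine tendsto_nhds_unique ((hψ.continuous_apply_right s).tendsto x |>.comp hP) ?_
  simpa only [Function.comp_def, h] using
    (hφ.1.tendsto (c₀ * s, x)).comp ((hc.mul_const s).prodMk_nhds hP)

lemma isEquilibrium_of_tendsto_abs_atTop (hφ : IsFlow φ) (hψ : IsFlow ψ) {ι : Type*}
    {l : Filter ι} [l.NeBot] {P : ι → M} {c : ι → ℝ} (hP : Tendsto P l (𝓝 x))
    (hc : Tendsto (fun i => |c i|) l atTop) (h : ∀ i s, ψ s (P i) = φ (c i * s) (P i)) :
    IsEquilibrium φ x := fun t => by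
  have hs : Tendsto (fun i => t / c i) l (𝓝 0) := by
    refine (tendsto_zero_iff_abs_tendsto_zero _).2 ?_
    simpa only [Function.comp_def, abs_div] using tendsto_const_nhds.div_atTop hc
  have hψx : Tendsto (fun i => ψ (t / c i) (P i)) l (𝓝 x) := by
    simpa only [Function.comp_def, hψ.2.1] using (hψ.1.tendsto (0, x)).comp (hs.prodMk_nhds hP)
  have heq : ∀ᶠ i in l, ψ (t / c i) (P i) = φ t (P i) := by
    filter_upwards [hc.eventually_gt_atTop 0] with i hi
    rw [h, mul_div_cancel₀ _ (abs_pos.1 hi)]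
  exact tendsto_nhds_unique ((hφ.continuous_apply_right t).tendsto x |>.comp hP) (hψx.congr' heq)

lemma exists_apply_eq_flow_mul_of_tendsto (hφ : IsFlow φ) (hψ : IsFlow ψ) {P : ℕ → M}
    {c : ℕ → ℝ} (hP : Tendsto P atTop (𝓝 x)) (h : ∀ n s, ψ s (P n) = φ (c n * s) (P n))
    (hx : ¬ IsEquilibrium φ x) : ∃ c₀ : ℝ, ∀ s, ψ s x = φ (c₀ * s) x := by
  by_cases hbdd : ∃ K, ∃ᶠ n in atTop, |c n| ≤ K
  · obtain ⟨K, hK⟩ := hbdd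
    obtain ⟨c₀, -, m, hm, hcm⟩ :=
      tendsto_subseq_of_frequently_bounded (isBounded_closedBall (x := 0))
        (hK.mono fun n hn => mem_closedBall_zero_iff.2 (Real.norm_eq_abs _ ▸ hn))
    exact ⟨c₀, apply_eq_flow_mul_of_tendsto hφ hψ (hP.comp hm.tendsto_atTop) hcm fun n => h (m n)⟩
  · simp only [not_exists, not_frequently, not_le] at hbdd
    exact absurd (isEquilibrium_of_tendsto_abs_atTop hφ hψ hP
      (tendsto_atTop.2 fun K => (hbdd K).mono fun _ => le_of_lt) h) hx

end Limits

theorem c0_centralizer_trivial_general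
    (φ : ℝ → M → M) (hφ : IsFlow φ)
    (h2 : Dense {p : M | IsPeriodicPoint φ p})
    (h3 : IsTransitiveFlow φ)
    (h4 : FinitelyManyShortPeriodicOrbits φ)
    (ψ : ℝ → M → M) (hψ : IsFlow ψ) (hcomm : FlowsCommute φ ψ) :
    ∃ c : ℝ, ∀ (t : ℝ) (x : M), ψ t x = φ (c * t) x := by
  obtain ⟨x, hx⟩ := h3
  obtain ⟨P, hP, hPx⟩ := mem_closure_iff_seq_limit.1 (h2 x)
  choose c hc using fun n => hcomm.exists_apply_eq_flow_mul_of_isPeriodicPoint hφ hψ h4 (hP n)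
  obtain ⟨c₀, hc₀⟩ :=
    exists_apply_eq_flow_mul_of_tendsto hφ hψ hPx hc (not_isEquilibrium_of_dense hx (hP 0))
  exact ⟨c₀, hcomm.apply_eq_flow_mul_of_dense hφ hψ hx hc₀⟩

/-- **Theorem B.** Let `M` be a compact connected Riemannian manifold without boundary and
`(X_t)_t` a continuous flow with (1) finitely many equilibria, (2) dense periodic points,
(3) transitivity, and (4) only finitely many periodic orbits of period `< T` for every `T`.
Then the `C^0`-centralizer of `(X_t)_t` is trivial: every continuous flow `(Y_s)_s` commuting
with `(X_t)_t` satisfies `Y_t = X_{ct}` for some constant `c ∈ ℝ`. -/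
theorem c0_centralizer_trivial
    [CompactSpace M] [ConnectedSpace M]
    (φ : ℝ → M → M) (hφ : IsFlow φ)
    (h1 : {p : M | IsEquilibrium φ p}.Finite)
    (h2 : Dense {p : M | IsPeriodicPoint φ p})
    (h3 : IsTransitiveFlow φ)
    (h4 : FinitelyManyShortPeriodicOrbits φ)
    (ψ : ℝ → M → M) (hψ : IsFlow ψ) (hcomm : FlowsCommute φ ψ) :
    ∃ c : ℝ, ∀ (t : ℝ) (x : M), ψ t x = φ (c * t) x :=
  c0_centralizer_trivial_general φ hφ h2 h3 h4 ψ hψ hcomm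
end
end

section
/- Let (X_t)_t be a continuous flow on a compact manifold M and let (Y_s)_s be a continuous flow commuting with (X_t)_t that preserves every (X_t)_t-orbit. Let M₀ = M∖(𝓔 ∪ 𝓟), where 𝓔 is the set of equilibrium points and 𝓟 the set of periodic points of (X_t)_t. Then for every x ∈ M₀ there exists a unique function τ(x,·): ℝ → ℝ such that (1) Y_t(x) = X_{τ(x,t)}(x) for every t ∈ ℝ, and (2) τ(x,·): ℝ → ℝ is continuous. -/
open Set Filter Topology Metric

noncomputable section

variable {M : Type*} [MetricSpace M]

/-- Existence and uniqueness of the orbital reparametrization: if a continuous flow `(Y_s)_s`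
commutes with `(X_t)_t` and preserves every `(X_t)_t`-orbit, then for every point `x` of
`M₀ = M ∖ (𝓔 ∪ 𝓟)` there is a unique function `τ(x, ·) : ℝ → ℝ` such that
`Y_t(x) = X_{τ(x,t)}(x)` for all `t`, and it is continuous. -/
theorem exists_unique_orbital_reparametrization
    [CompactSpace M]
    (φ : ℝ → M → M) (hφ : IsFlow φ)
    (ψ : ℝ → M → M) (hψ : IsFlow ψ) (hcomm : FlowsCommute φ ψ)
    (horb : ∀ (x : M) (s : ℝ), ψ s x ∈ flowOrbit φ x)
    (x : M) (hx : ¬ IsEquilibrium φ x ∧ ¬ IsPeriodicPoint φ x) :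
    ∃! τ : ℝ → ℝ, (∀ t : ℝ, ψ t x = φ (τ t) x) ∧ Continuous τ := by
  obtain ⟨hφc, hφ0, hφadd⟩ := hφ
  obtain ⟨hψc, hψ0, hψadd⟩ := hψ
  -- the map t ↦ φ t x is injective
  have hinj : ∀ a b : ℝ, φ a x = φ b x → a = b := by
    intro a b hab
    by_contra hne
    have hTx : φ (a - b) x = x := by
      have h1 := congrArg (φ (-b)) hab
      rw [← hφadd, ← hφadd] at h1
      have h2 : (-b) + b = (0 : ℝ) := by ring
      rw [h2, hφ0] at h1
      have h3 : a - b = -b + a := by ring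
      rw [h3]; exact h1
    have hper : ∃ T > 0, φ T x = x := by
      rcases lt_trichotomy a b with h | h | h
      · refine ⟨b - a, by linarith, ?_⟩
        have h1 := congrArg (φ (b - a)) hTx
        rw [← hφadd] at h1
        have h2 : (b - a) + (a - b) = (0 : ℝ) := by ring
        rw [h2, hφ0] at h1
        exact h1.symm
      · exact absurd h hne
      · exact ⟨a - b, by linarith, hTx⟩
    exact hx.2 ⟨hper, hx.1⟩
  have hex : ∀ s : ℝ, ∃ t : ℝ, φ t x = ψ s x := fun s => horb x s
  set τ : ℝ → ℝ := fun s => Classical.choose (hex s) with hτdef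
  have hτspec : ∀ s, φ (τ s) x = ψ s x := fun s => Classical.choose_spec (hex s)
  have huniq : ∀ s t, ψ s x = φ t x → τ s = t := fun s t h =>
    hinj _ _ ((hτspec s).trans h)
  have hτ0 : τ 0 = 0 := huniq 0 0 (by rw [hψ0, hφ0])
  have hadd : ∀ s t, τ (s + t) = τ s + τ t := by
    intro s t
    apply huniq
    rw [hψadd, ← hτspec t, hcomm, ← hτspec s, ← hφadd, add_comm (τ t)]
  -- τ as an additive hom, hence ℚ-linear
  let F : ℝ →+ ℝ := AddMonoidHom.mk' τ hadd
  have hrat : ∀ q : ℚ, τ (q : ℝ) = (q : ℝ) * τ 1 := by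
    intro q
    have := map_ratCast_smul F ℝ ℝ q (1 : ℝ)
    simpa [F, smul_eq_mul] using this
  -- continuity helpers
  have hcψ : Continuous fun s : ℝ => ψ s x :=
    hψc.comp (continuous_id.prodMk continuous_const)
  have hcφ : Continuous fun s : ℝ => φ (s * τ 1) x :=
    hφc.comp ((continuous_id.mul continuous_const).prodMk continuous_const)
  have hkey : ∀ s : ℝ, ψ s x = φ (s * τ 1) x := by
    have hcl : IsClosed {s : ℝ | ψ s x = φ (s * τ 1) x} := isClosed_eq hcψ hcφ
    have hsub : Set.range ((↑) : ℚ → ℝ) ⊆ {s : ℝ | ψ s x = φ (s * τ 1) x} := by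
      rintro _ ⟨q, rfl⟩
      show ψ (q : ℝ) x = φ ((q : ℝ) * τ 1) x
      rw [← hrat q, hτspec]
    have hdense : Dense (Set.range ((↑) : ℚ → ℝ)) := Rat.denseRange_cast
    intro s
    exact (hcl.closure_subset_iff.mpr hsub) (hdense s)
  have hτlin : ∀ s, τ s = s * τ 1 := fun s => huniq s _ (hkey s)
  refine ⟨τ, ⟨fun t => (hτspec t).symm, ?_⟩, ?_⟩
  · have : τ = fun s => s * τ 1 := funext hτlin
    rw [this]
    exact continuous_id.mul continuous_const
  · rintro τ' ⟨h1, -⟩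
    funext s
    exact (huniq s (τ' s) (h1 s)).symm
end
end

section
/- Let M be a compact, connected Riemannian manifold without boundary and let (X_t)_t be a continuous flow on M satisfying the hypotheses: finitely many equilibrium points, dense periodic points, transitivity, and for each T > 0 only finitely many periodic orbits of period smaller than T. Let (Y_s)_s be a continuous flow commuting with (X_t)_t. Then there exists a continuous map h: M∖(𝓔 ∪ 𝓟) → ℝ, constant along the orbits of (X_t)_t, such that Y_t(x) = X_{h(x)·t}(x) for every x ∈ M∖(𝓔 ∪ 𝓟) and every t ∈ ℝ, where 𝓔 and 𝓟 denote the sets of equilibrium and periodic points of (X_t)_t respectively. -/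
open Set Filter Topology Metric

noncomputable section

variable {M : Type*} [MetricSpace M]

namespace ThmB

variable {φ ψ : ℝ → M → M}

lemma cont_t (hφ : IsFlow φ) (x : M) : Continuous fun t => φ t x :=
  hφ.1.comp (continuous_id.prodMk continuous_const)

lemma cont_x (hφ : IsFlow φ) (t : ℝ) : Continuous fun x => φ t x :=
  hφ.1.comp (continuous_const.prodMk continuous_id)

lemma flow_cancel (hφ : IsFlow φ) (t : ℝ) (x : M) : φ (-t) (φ t x) = x := by
  rw [← hφ.2.2, neg_add_cancel, hφ.2.1]

/-- subtracting periods -/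
lemma sub_period (hφ : IsFlow φ) {x : M} {a b : ℝ} (h : φ a x = φ b x) :
    φ (a - b) x = x := by
  have : φ (-b) (φ a x) = φ (-b) (φ b x) := by rw [h]
  rwa [flow_cancel hφ, ← hφ.2.2, show -b + a = a - b by ring] at this

lemma equil_shift (hφ : IsFlow φ) {x : M} (t : ℝ) (h : IsEquilibrium φ x) :
    IsEquilibrium φ (φ t x) := by
  intro u
  rw [← hφ.2.2, h (u + t), h t]

lemma equil_of_shift (hφ : IsFlow φ) {x : M} {t : ℝ} (h : IsEquilibrium φ (φ t x)) :
    IsEquilibrium φ x := by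
  have hx : x = φ (-t) (φ t x) := (flow_cancel hφ t x).symm
  rw [hx]
  exact equil_shift hφ (-t) h

lemma periodic_shift (hφ : IsFlow φ) {x : M} (t : ℝ) (h : IsPeriodicPoint φ x) :
    IsPeriodicPoint φ (φ t x) := by
  obtain ⟨⟨T, hT, hTx⟩, hne⟩ := h
  refine ⟨⟨T, hT, ?_⟩, fun he => hne (equil_of_shift hφ he)⟩
  rw [← hφ.2.2, add_comm, hφ.2.2, hTx]

lemma periodic_of_shift (hφ : IsFlow φ) {x : M} {t : ℝ} (h : IsPeriodicPoint φ (φ t x)) :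
    IsPeriodicPoint φ x := by
  have hx : x = φ (-t) (φ t x) := (flow_cancel hφ t x).symm
  rw [hx]
  exact periodic_shift hφ (-t) h

/-- The group of periods of a point. -/
def periodGroup (hφ : IsFlow φ) (x : M) : AddSubgroup ℝ where
  carrier := {t | φ t x = x}
  zero_mem' := hφ.2.1 x
  add_mem' := by
    intro a b ha hb
    show φ (a + b) x = x
    rw [hφ.2.2, hb, ha]
  neg_mem' := by
    intro a ha
    show φ (-a) x = x
    calc φ (-a) x = φ (-a) (φ a x) := by rw [ha]
      _ = x := flow_cancel hφ a x

lemma mem_periodGroup (hφ : IsFlow φ) {x : M} {t : ℝ} :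
    t ∈ periodGroup hφ x ↔ φ t x = x := Iff.rfl

lemma isClosed_periodGroup (hφ : IsFlow φ) (x : M) :
    IsClosed ((periodGroup hφ x : Set ℝ)) := by
  have : (periodGroup hφ x : Set ℝ) = (fun t => φ t x) ⁻¹' {x} := rfl
  rw [this]
  exact isClosed_singleton.preimage (cont_t hφ x)

/-- A periodic point has a positive minimal period generating its period group. -/
lemma exists_minimal_period (hφ : IsFlow φ) {p : M} (hp : IsPeriodicPoint φ p) :
    ∃ T : ℝ, 0 < T ∧ φ T p = p ∧ ∀ t : ℝ, φ t p = p → ∃ k : ℤ, t = k * T := by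
  rcases AddSubgroup.dense_or_cyclic (periodGroup hφ p) with hd | ⟨a, ha⟩
  · exfalso
    apply hp.2
    intro t
    have : (periodGroup hφ p : Set ℝ) = univ := by
      rw [← (isClosed_periodGroup hφ p).closure_eq]
      exact hd.closure_eq
    have ht : t ∈ (periodGroup hφ p : Set ℝ) := this ▸ mem_univ t
    exact ht
  · have hmem : ∀ t : ℝ, t ∈ periodGroup hφ p ↔ ∃ k : ℤ, k • a = t := by
      intro t
      rw [ha, AddSubgroup.mem_closure_singleton]
    obtain ⟨⟨T₀, hT₀, hT₀p⟩, _⟩ := hp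
    have haT₀ : ∃ k : ℤ, k • a = T₀ := (hmem T₀).1 hT₀p
    have ha0 : a ≠ 0 := by
      rintro rfl
      obtain ⟨k, hk⟩ := haT₀
      simp at hk
      linarith
    refine ⟨|a|, abs_pos.2 ha0, ?_, ?_⟩
    · have haG : a ∈ periodGroup hφ p := (hmem a).2 ⟨1, one_smul _ _⟩
      rcases abs_choice a with h | h
      · rw [h]; exact haG
      · rw [h]; exact (periodGroup hφ p).neg_mem haG
    · intro t ht
      obtain ⟨k, hk⟩ := (hmem t).1 ht
      rcases abs_choice a with h | h
      · exact ⟨k, by rw [h, ← hk, zsmul_eq_mul]⟩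
      · exact ⟨-k, by rw [h, ← hk, zsmul_eq_mul]; push_cast; ring⟩

lemma period_int_mul (hφ : IsFlow φ) {p : M} {T : ℝ} (hTp : φ T p = p) (k : ℤ) (t : ℝ) :
    φ (t + k * T) p = φ t p := by
  have hkT : (k * T) ∈ periodGroup hφ p := by
    have : T ∈ periodGroup hφ p := hTp
    simpa [zsmul_eq_mul] using (periodGroup hφ p).zsmul_mem this k
  rw [hφ.2.2, show φ (k * T) p = p from hkT]

lemma mem_orbit_self (hφ : IsFlow φ) (x : M) : x ∈ flowOrbit φ x := ⟨0, hφ.2.1 x⟩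

lemma orbit_eq_of_mem (hφ : IsFlow φ) {x y : M} (h : y ∈ flowOrbit φ x) :
    flowOrbit φ y = flowOrbit φ x := by
  obtain ⟨t, rfl⟩ := h
  ext z
  simp only [flowOrbit, mem_range]
  constructor
  · rintro ⟨u, rfl⟩
    exact ⟨u + t, hφ.2.2 u t x⟩
  · rintro ⟨u, rfl⟩
    exact ⟨u - t, by rw [← hφ.2.2, sub_add_cancel]⟩

lemma orbit_isCompact (hφ : IsFlow φ) {p : M} {T : ℝ} (hT : 0 < T) (hTp : φ T p = p) :
    IsCompact (flowOrbit φ p) := by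
  have heq : flowOrbit φ p = (fun t => φ t p) '' (Icc 0 T) := by
    apply Subset.antisymm
    · rintro y ⟨t, rfl⟩
      refine ⟨t - ⌊t / T⌋ * T, ⟨Int.sub_floor_div_mul_nonneg t hT,
        le_of_lt (Int.sub_floor_div_mul_lt t hT)⟩, ?_⟩
      show φ (t - ⌊t / T⌋ * T) p = φ t p
      have := period_int_mul hφ hTp (⌊t / T⌋) (t - ⌊t / T⌋ * T)
      rw [show t - ⌊t / T⌋ * T + ⌊t / T⌋ * T = t by ring] at this
      exact this.symm
    · rintro y ⟨t, _, rfl⟩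
      exact ⟨t, rfl⟩
  rw [heq]
  exact isCompact_Icc.image (cont_t hφ p)

/-- The commuting flow preserves each periodic orbit of `φ`. -/
lemma psi_mem_orbit (hφ : IsFlow φ) (hψ : IsFlow ψ) (hcomm : FlowsCommute φ ψ)
    (h4 : FinitelyManyShortPeriodicOrbits φ) {p : M} (hp : IsPeriodicPoint φ p) :
    ∀ s : ℝ, ∃ t : ℝ, ψ s p = φ t p := by
  obtain ⟨⟨T₀, hT₀, hT₀p⟩, hnep⟩ := hp
  obtain ⟨F, hF, hFspec⟩ := h4 (T₀ + 1) (by linarith)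
  have hper : ∀ s : ℝ, IsPeriodicPoint φ (ψ s p) ∧ φ T₀ (ψ s p) = ψ s p := by
    intro s
    have h1 : φ T₀ (ψ s p) = ψ s p := by rw [← hcomm s T₀ p, hT₀p]
    have h2 : ¬ IsEquilibrium φ (ψ s p) := by
      intro he
      apply hnep
      intro u
      have hcancel : ∀ z : M, ψ (-s) (ψ s z) = z := by
        intro z
        rw [← hψ.2.2, neg_add_cancel, hψ.2.1]
      calc φ u p = ψ (-s) (ψ s (φ u p)) := (hcancel _).symm
        _ = ψ (-s) (φ u (ψ s p)) := by rw [hcomm s u p]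
        _ = ψ (-s) (ψ s p) := by rw [he u]
        _ = p := hcancel _
    exact ⟨⟨⟨T₀, hT₀, h1⟩, h2⟩, h1⟩
  set f : ℝ → M := fun s => ψ s p with hf_def
  have hf : Continuous f := cont_t hψ p
  set F' : Set M := {q ∈ F | IsPeriodicPoint φ q ∧ flowOrbit φ q ≠ flowOrbit φ p} with hF'_def
  have hF'fin : F'.Finite := hF.subset (sep_subset _ _)
  set B : Set M := ⋃ q ∈ F', flowOrbit φ q with hB_def
  have hBclosed : IsClosed B := by
    apply IsCompact.isClosed
    apply hF'fin.isCompact_biUnion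
    intro q hq
    obtain ⟨⟨Tq, hTq, hTqq⟩, _⟩ := hq.2.1
    exact orbit_isCompact hφ hTq hTqq
  have hcover : ∀ s : ℝ, f s ∈ flowOrbit φ p ∪ B := by
    intro s
    obtain ⟨q, hqF, hq⟩ := hFspec (f s) (hper s).1 ⟨T₀, hT₀, by linarith, (hper s).2⟩
    by_cases horb : flowOrbit φ q = flowOrbit φ p
    · left
      have := mem_orbit_self hφ (f s)
      rw [hq, horb] at this
      exact this
    · right
      have hqmem : q ∈ flowOrbit φ (f s) := hq ▸ mem_orbit_self hφ q
      have hqper : IsPeriodicPoint φ q := by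
        obtain ⟨t, ht⟩ := hqmem
        exact ht ▸ periodic_shift hφ t (hper s).1
      have hqF' : q ∈ F' := ⟨hqF, hqper, horb⟩
      exact mem_biUnion hqF' (hq ▸ mem_orbit_self hφ (f s))
  have hdisj : ∀ y ∈ flowOrbit φ p, y ∉ B := by
    intro y hy hyB
    obtain ⟨q, hqF', hyq⟩ := mem_iUnion₂.1 hyB
    exact hqF'.2.2 ((orbit_eq_of_mem hφ hyq).symm.trans (orbit_eq_of_mem hφ hy))
  have hA : {s : ℝ | f s ∈ flowOrbit φ p} = f ⁻¹' Bᶜ := by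
    ext s
    constructor
    · exact fun h => hdisj _ h
    · intro h
      rcases hcover s with h' | h'
      · exact h'
      · exact absurd h' h
  have hAclopen : IsClopen {s : ℝ | f s ∈ flowOrbit φ p} := by
    constructor
    · have : IsClosed (flowOrbit φ p) := (orbit_isCompact hφ hT₀ hT₀p).isClosed
      exact this.preimage hf
    · rw [hA]
      exact hBclosed.isOpen_compl.preimage hf
  have hne : {s : ℝ | f s ∈ flowOrbit φ p}.Nonempty := by
    refine ⟨0, ?_⟩
    show ψ 0 p ∈ flowOrbit φ p
    rw [hψ.2.1]
    exact mem_orbit_self hφ p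
  have huniv := hAclopen.eq_univ hne
  intro s
  have hs : f s ∈ flowOrbit φ p := by
    have : s ∈ {s : ℝ | f s ∈ flowOrbit φ p} := huniv ▸ mem_univ s
    exact this
  obtain ⟨t, ht⟩ := hs
  exact ⟨t, ht.symm⟩

set_option maxHeartbeats 1000000 in
/-- On a periodic orbit, the commuting flow is a linear reparametrization. -/
lemma periodic_linear (hφ : IsFlow φ) (hψ : IsFlow ψ) (hcomm : FlowsCommute φ ψ)
    (h4 : FinitelyManyShortPeriodicOrbits φ) {p : M} (hp : IsPeriodicPoint φ p) :
    ∃ c : ℝ, ∀ s : ℝ, ψ s p = φ (c * s) p := by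
  obtain ⟨T, hT, hTp, hmin⟩ := exists_minimal_period hφ hp
  have horb := psi_mem_orbit hφ hψ hcomm h4 hp
  have habs_sub : ∀ x y : ℝ, |x - y| ≤ |x| + |y| := by
    intro x y
    have := abs_add_le x (-y)
    simpa [sub_eq_add_neg] using this
  -- uniqueness of representatives at distance < T
  have huniq : ∀ t t' : ℝ, φ t p = φ t' p → |t - t'| < T → t = t' := by
    intro t t' h hd
    obtain ⟨k, hk⟩ := hmin _ (sub_period hφ h)
    have h2 : |(k:ℝ)| * T < T := by
      have h2b : |(k:ℝ) * T| < T := by rw [← hk]; exact hd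
      rwa [abs_mul, abs_of_pos hT] at h2b
    have hk0 : k = 0 := by
      by_contra h0
      have h3 : (1:ℝ) ≤ |(k:ℝ)| := by exact_mod_cast Int.one_le_abs h0
      nlinarith
    rw [hk0] at hk
    simp at hk
    linarith [hk]
  -- a compact piece of the orbit away from p
  set K : Set M := (fun t => φ t p) '' (Icc (T/4) (3*T/4)) with hK_def
  have hKc : IsCompact K := isCompact_Icc.image (cont_t hφ p)
  have hKne : K.Nonempty := ⟨φ (T/4) p, ⟨T/4, ⟨le_refl _, by linarith⟩, rfl⟩⟩
  have hpK : p ∉ K := by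
    rintro ⟨t, ⟨ht1, ht2⟩, hte⟩
    obtain ⟨k, hk⟩ := hmin t hte
    rw [hk] at ht1 ht2
    rcases Int.lt_or_le k 1 with h | h
    · have hk0 : (k:ℝ) ≤ 0 := by exact_mod_cast Int.lt_add_one_iff.mp h
      nlinarith
    · have hk1 : (1:ℝ) ≤ (k:ℝ) := by exact_mod_cast h
      nlinarith
  set ε := infDist p K with hε_def
  have hε : 0 < ε := (hKc.isClosed.notMem_iff_infDist_pos hKne).1 hpK
  have htend : Tendsto (fun s => ψ s p) (𝓝 0) (𝓝 p) := by
    have := (cont_t hψ p).tendsto 0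
    rwa [hψ.2.1] at this
  obtain ⟨δ, hδpos, hδ⟩ : ∃ δ > 0, ∀ s : ℝ, |s| < δ → dist (ψ s p) p < ε := by
    have h := Metric.tendsto_nhds.1 htend ε hε
    rw [Metric.eventually_nhds_iff] at h
    obtain ⟨d, hd, h⟩ := h
    exact ⟨d, hd, fun s hs => h (by rwa [Real.dist_eq, sub_zero])⟩
  -- representatives of ψ s p in the window [-T/4, T/4]
  have hrep : ∀ s : ℝ, |s| < δ → ∃ t, |t| ≤ T/4 ∧ ψ s p = φ t p := by
    intro s hs
    obtain ⟨t, ht⟩ := horb s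
    set t' := t - ⌊t / T⌋ * T with ht'_def
    have h0 : 0 ≤ t' := Int.sub_floor_div_mul_nonneg t hT
    have h1 : t' < T := Int.sub_floor_div_mul_lt t hT
    have heq : φ t' p = ψ s p := by
      have h2 := period_int_mul hφ hTp (⌊t / T⌋) t'
      rw [show t' + (⌊t / T⌋ : ℝ) * T = t by rw [ht'_def]; ring] at h2
      rw [ht]
      exact h2.symm
    have hnotK : ¬ (T/4 ≤ t' ∧ t' ≤ 3*T/4) := by
      rintro ⟨ha, hb⟩
      have hmem : φ t' p ∈ K := mem_image_of_mem _ ⟨ha, hb⟩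
      have h3 := infDist_le_dist_of_mem (x := p) hmem
      rw [heq, dist_comm] at h3
      have h4 := hδ s hs
      rw [← hε_def] at h3
      linarith
    rcases lt_or_ge t' (T/4) with h | h
    · exact ⟨t', by rw [abs_of_nonneg h0]; linarith, heq.symm⟩
    · have h2 : 3*T/4 < t' := by
        by_contra hc
        push_neg at hc
        exact hnotK ⟨h, hc⟩
      refine ⟨t' - T, by rw [abs_of_nonpos (by linarith)]; linarith, ?_⟩
      have h3 := period_int_mul hφ hTp (-1) (t' - T)
      rw [show t' - T + ((-1:ℤ) : ℝ) * T = t' - 2*T by push_cast; ring] at h3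
      have h4 := period_int_mul hφ hTp (-1) t'
      rw [show t' + ((-1:ℤ) : ℝ) * T = t' - T by push_cast; ring] at h4
      rw [h4, heq]
  have hrep' : ∀ s : ℝ, ∃ t, |s| < δ → (|t| ≤ T/4 ∧ ψ s p = φ t p) := by
    intro s
    by_cases h : |s| < δ
    · obtain ⟨t, ht⟩ := hrep s h
      exact ⟨t, fun _ => ht⟩
    · exact ⟨0, fun h' => absurd h' h⟩
  choose r hr using hrep'
  set β := δ / 4 with hβ_def
  have hβ : 0 < β := by positivity
  have hβδ : ∀ s : ℝ, |s| ≤ 2*β → |s| < δ := by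
    intro s hs
    rw [hβ_def] at hs
    linarith
  have hRb : ∀ s : ℝ, |s| ≤ 2*β → |r s| ≤ T/4 := fun s hs => (hr s (hβδ s hs)).1
  have hRe : ∀ s : ℝ, |s| ≤ 2*β → ψ s p = φ (r s) p := fun s hs => (hr s (hβδ s hs)).2
  -- additivity
  have hRadd : ∀ a b : ℝ, |a| ≤ β → |b| ≤ β → r (a + b) = r a + r b := by
    intro a b ha hb
    have hab : |a + b| ≤ 2*β := (abs_add_le a b).trans (by linarith)
    have ha' : |a| ≤ 2*β := by linarith
    have hb' : |b| ≤ 2*β := by linarith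
    have heq : φ (r (a+b)) p = φ (r a + r b) p := by
      calc φ (r (a+b)) p = ψ (a+b) p := (hRe _ hab).symm
        _ = ψ a (ψ b p) := hψ.2.2 a b p
        _ = ψ a (φ (r b) p) := by rw [hRe b hb']
        _ = φ (r b) (ψ a p) := hcomm a (r b) p
        _ = φ (r b) (φ (r a) p) := by rw [hRe a ha']
        _ = φ (r a + r b) p := by rw [← hφ.2.2, add_comm]
    apply huniq _ _ heq
    have h1 := hRb _ hab
    have h2 := hRb a ha'
    have h3 := hRb b hb'
    calc |r (a+b) - (r a + r b)| ≤ |r (a+b)| + |r a + r b| := habs_sub _ _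
      _ ≤ T/4 + (|r a| + |r b|) := by linarith [abs_add_le (r a) (r b)]
      _ < T := by linarith
  have hr0 : r 0 = 0 := by
    have h := hRadd 0 0 (by simpa using hβ.le) (by simpa using hβ.le)
    simp at h
    linarith
  -- natural scaling
  have hRnat : ∀ (n : ℕ) (u : ℝ), |(n:ℝ) * u| ≤ β → r ((n:ℝ) * u) = n * r u := by
    intro n
    induction n with
    | zero => intro u _; simpa using hr0
    | succ n ih =>
      intro u hu
      push_cast at hu ⊢
      have hn1 : |((n:ℝ)+1) * u| = ((n:ℝ)+1) * |u| := by
        rw [abs_mul, abs_of_nonneg (by positivity : (0:ℝ) ≤ (n:ℝ)+1)]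
      have hu1 : |u| ≤ β := by
        rw [hn1] at hu
        nlinarith [abs_nonneg u, Nat.cast_nonneg (α := ℝ) n]
      have hun : |(n:ℝ) * u| ≤ β := by
        rw [abs_mul, abs_of_nonneg (Nat.cast_nonneg (α := ℝ) n)]
        rw [hn1] at hu
        nlinarith [abs_nonneg u, Nat.cast_nonneg (α := ℝ) n]
      have h1 : ((n:ℝ)+1) * u = (n:ℝ) * u + u := by ring
      rw [h1, hRadd _ _ (by rwa [abs_mul, abs_of_nonneg (Nat.cast_nonneg (α := ℝ) n)] at hun ⊢) hu1]
      · rw [ih u hun]; ring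
  -- smallness bound
  have hRsmall : ∀ (n : ℕ) (u : ℝ), 1 ≤ n → |u| ≤ β / n → |r u| ≤ T / (4 * n) := by
    intro n u hn hu
    have hn0 : (0:ℝ) < n := by exact_mod_cast hn
    have h1 : |(n:ℝ) * u| ≤ β := by
      rw [abs_mul, abs_of_nonneg hn0.le]
      calc (n:ℝ) * |u| ≤ (n:ℝ) * (β / n) := by nlinarith
        _ = β := by field_simp
    have h2 := hRnat n u h1
    have h3 : |r ((n:ℝ) * u)| ≤ T/4 := hRb _ (by linarith)
    rw [h2, abs_mul, abs_of_nonneg hn0.le] at h3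
    rw [le_div_iff₀ (by positivity : (0:ℝ) < 4*n)]
    nlinarith [abs_nonneg (r u)]
  -- linearity near 0
  have hrβ : |r β| ≤ T/4 := hRb β (by rw [abs_of_pos hβ]; linarith)
  have hlin : ∀ s : ℝ, |s| ≤ β → r s = (r β / β) * s := by
    have key : ∀ s : ℝ, 0 ≤ s → s ≤ β → r s = (r β / β) * s := by
      intro s hs0 hsβ
      have habs : ∀ n : ℕ, 1 ≤ n → |r s - (r β / β) * s| ≤ T / (2 * n) := by
        intro n hn
        have hn0 : (0:ℝ) < n := by exact_mod_cast hn
        set m : ℕ := ⌊ (n * s) / β ⌋₊ with hm_def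
        have hm1 : ((m:ℝ)) * β ≤ n * s := by
          have := Nat.floor_le (by positivity : (0:ℝ) ≤ (n * s) / β)
          rw [← hm_def] at this
          calc ((m:ℝ)) * β ≤ ((n * s)/β) * β := by nlinarith
            _ = n * s := by field_simp
        have hm2 : (n:ℝ) * s < ((m:ℝ) + 1) * β := by
          have := Nat.lt_floor_add_one ((n * s) / β)
          rw [← hm_def] at this
          calc (n:ℝ) * s = ((n*s)/β) * β := by field_simp
            _ < ((m:ℝ)+1) * β := by nlinarith
        have hmn : (m:ℝ) ≤ n := by nlinarith
        set u := s - m * (β / n) with hu_def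
        have hu0 : 0 ≤ u := by
          rw [hu_def]
          have : (m:ℝ) * (β / n) ≤ s := by
            rw [div_eq_mul_inv, ← mul_assoc]
            rw [mul_inv_le_iff₀ hn0]
            nlinarith
          linarith
        have hu1 : u ≤ β / n := by
          rw [le_div_iff₀ hn0, hu_def]
          have hexp : (s - (m:ℝ) * (β / n)) * n = s * n - m * β := by
            field_simp
          rw [hexp]
          nlinarith
        have humem : |u| ≤ β / n := by rw [abs_of_nonneg hu0]; exact hu1
        have humem' : |u| ≤ β := humem.trans (div_le_self hβ.le (by exact_mod_cast hn))
        have hmβn : |(m:ℝ) * (β / n)| ≤ β := by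
          rw [abs_of_nonneg (by positivity)]
          rw [div_eq_mul_inv, ← mul_assoc, mul_inv_le_iff₀ hn0]
          nlinarith
        have hsplit : s = (m:ℝ) * (β / n) + u := by rw [hu_def]; ring
        have e1 : r s = (m:ℝ) * r (β / n) + r u := by
          rw [hsplit, hRadd _ _ hmβn humem', hRnat m (β/n) hmβn]
        have e2 : r (β / n) = r β / n := by
          have hb : (n:ℝ) * (β/n) = β := by field_simp
          have h := hRnat n (β / n) (by rw [hb, abs_of_pos hβ])
          rw [hb] at h
          rw [h, mul_div_cancel_left₀ _ (ne_of_gt hn0)]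
        have hru : |r u| ≤ T / (4 * n) := hRsmall n u hn humem
        have e3 : r s - (r β / β) * s = r β * ((m:ℝ)/n - s/β) + r u := by
          rw [e1, e2]
          field_simp
          ring
        have hd1 : |(m:ℝ)/n - s/β| ≤ 1/n := by
          have d1 : (m:ℝ)/n ≤ s/β := by
            rw [div_le_div_iff₀ hn0 hβ]
            nlinarith
          have d2 : s/β ≤ ((m:ℝ)+1)/n := by
            rw [div_le_div_iff₀ hβ hn0]
            nlinarith
          have dsplit : ((m:ℝ)+1)/n = (m:ℝ)/n + 1/n := add_div _ _ _
          have dpos : (0:ℝ) ≤ 1/n := by positivity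
          rw [abs_le]
          constructor
          · linarith
          · linarith
        rw [e3]
        calc |r β * ((m:ℝ)/n - s/β) + r u| ≤ |r β * ((m:ℝ)/n - s/β)| + |r u| := abs_add_le _ _
          _ = |r β| * |(m:ℝ)/n - s/β| + |r u| := by rw [abs_mul]
          _ ≤ (T/4) * (1/n) + T/(4*n) := by
              gcongr
          _ = T / (2*n) := by field_simp; ring
      by_contra hne
      have hpos : 0 < |r s - (r β / β) * s| := abs_pos.2 (sub_ne_zero.2 hne)
      obtain ⟨n, hn⟩ := exists_nat_gt (T / (2 * |r s - (r β / β) * s|))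
      have hn1 : 1 ≤ n := by
        rcases Nat.eq_zero_or_pos n with rfl | h
        · exfalso
          have h0 : (0:ℝ) < T / (2 * |r s - (r β / β) * s|) := by positivity
          simp at hn
          linarith
        · exact h
      have h5 := habs n hn1
      have hn0 : (0:ℝ) < n := by exact_mod_cast hn1
      rw [div_lt_iff₀ (by positivity)] at hn
      have : T / (2*n) < |r s - (r β / β) * s| := by
        rw [div_lt_iff₀ (by positivity)]
        nlinarith
      linarith
    intro s hsβ
    rcases le_or_gt 0 s with h | h
    · exact key s h (by rwa [abs_of_nonneg h] at hsβ)
    · have hneg : r (-s) = (r β / β) * (-s) := by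
        apply key (-s) (by linarith)
        rwa [abs_of_neg h] at hsβ
      have hns : |(-s)| ≤ β := by rwa [abs_neg]
      have h6 := hRadd s (-s) hsβ hns
      simp only [add_neg_cancel, hr0] at h6
      have : r s = - r (-s) := by linarith
      rw [this, hneg]
      ring
  set c := r β / β with hc_def
  -- extend linearity to all times by the flow property
  have hstep : ∀ (n : ℕ) (u : ℝ), |u| ≤ β → ψ ((n:ℝ) * u) p = φ (c * ((n:ℝ) * u)) p := by
    intro n
    induction n with
    | zero => intro u _; simp [hψ.2.1, hφ.2.1]
    | succ n ih =>
      intro u hu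
      push_cast
      have h1 : ((n:ℝ)+1) * u = u + (n:ℝ) * u := by ring
      rw [h1, hψ.2.2, ih u hu, hcomm u (c * ((n:ℝ) * u)) p,
        hRe u (by linarith), hlin u hu, ← hφ.2.2]
      congr 1
      ring
  refine ⟨c, fun s => ?_⟩
  obtain ⟨n, hn⟩ := exists_nat_gt (|s| / β)
  have hn0 : 0 < n := by
    rcases Nat.eq_zero_or_pos n with rfl | h
    · exfalso
      have : (0:ℝ) ≤ |s| / β := by positivity
      simp at hn
      linarith
    · exact h
  have hn0' : (0:ℝ) < n := by exact_mod_cast hn0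
  have hu : |s / n| ≤ β := by
    rw [abs_div, abs_of_nonneg hn0'.le, div_le_iff₀ hn0']
    rw [div_lt_iff₀ hβ] at hn
    nlinarith
  have h7 := hstep n (s / n) hu
  rw [show (n:ℝ) * (s / n) = s from by field_simp] at h7
  exact h7

/-- `ψ` is a linear reparametrization of `φ` at `x` with slope `c`. -/
def Lin (φ ψ : ℝ → M → M) (x : M) (c : ℝ) : Prop := ∀ s : ℝ, ψ s x = φ (c * s) x

lemma not_fix_one (_hφ : IsFlow φ) {x : M}
    (hx : ¬ IsEquilibrium φ x ∧ ¬ IsPeriodicPoint φ x) : φ 1 x ≠ x :=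
  fun h => hx.2 ⟨⟨1, one_pos, h⟩, hx.1⟩

lemma lin_unique (hφ : IsFlow φ) {x : M} (hx : ¬ IsEquilibrium φ x ∧ ¬ IsPeriodicPoint φ x)
    {c c' : ℝ} (h : Lin φ ψ x c) (h' : Lin φ ψ x c') : c = c' := by
  by_contra hne
  apply hx.1
  intro t
  have hcc : c - c' ≠ 0 := sub_ne_zero.2 hne
  set s := t / (c - c') with hs
  have h1 : φ (c * s) x = φ (c' * s) x := by rw [← h s, ← h' s]
  have h2 := sub_period hφ h1
  rw [show c * s - c' * s = t from by rw [hs]; field_simp] at h2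
  exact h2

lemma bound_near (hφ : IsFlow φ) (hψ : IsFlow ψ) {x : M} (hx1 : φ 1 x ≠ x) :
    ∃ ε > 0, ∃ C : ℝ, ∀ y c, dist y x ≤ ε → Lin φ ψ y c → |c| ≤ C := by
  by_contra hcon
  push_neg at hcon
  have hk : ∀ k : ℕ, ∃ y c, dist y x ≤ 1/(k+1) ∧ Lin φ ψ y c ∧ ((k:ℝ)+1) < |c| := by
    intro k
    obtain ⟨y, c, h1, h2, h3⟩ := hcon (1/(k+1)) (by positivity) ((k:ℝ)+1)
    exact ⟨y, c, h1, h2, h3⟩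
  choose y c hdist hlin hbig using hk
  have hc0 : ∀ k, c k ≠ 0 := by
    intro k h
    have hb := hbig k
    rw [h] at hb
    simp at hb
    linarith [Nat.cast_nonneg (α := ℝ) k]
  have hy : Tendsto y atTop (𝓝 x) := by
    apply tendsto_iff_dist_tendsto_zero.2
    exact squeeze_zero (fun k => dist_nonneg) hdist tendsto_one_div_add_atTop_nhds_zero_nat
  have hs : Tendsto (fun k => 1 / c k) atTop (𝓝 0) := by
    apply squeeze_zero_norm ?_ tendsto_one_div_add_atTop_nhds_zero_nat
    intro k
    rw [Real.norm_eq_abs, abs_div, abs_one]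
    exact one_div_le_one_div_of_le (by positivity) (hbig k).le
  have key : ∀ k, φ 1 (y k) = ψ (1 / c k) (y k) := by
    intro k
    have h := hlin k (1 / c k)
    rw [mul_one_div, div_self (hc0 k)] at h
    exact h.symm
  have lim1 : Tendsto (fun k => φ 1 (y k)) atTop (𝓝 (φ 1 x)) :=
    ((cont_x hφ 1).tendsto x).comp hy
  have lim2 : Tendsto (fun k => ψ (1 / c k) (y k)) atTop (𝓝 x) := by
    have hp : Tendsto (fun k => ((1 / c k : ℝ), y k)) atTop (𝓝 ((0:ℝ), x)) :=
      hs.prodMk_nhds hy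
    have h := (hψ.1.tendsto ((0:ℝ), x)).comp hp
    rwa [hψ.2.1] at h
  have lim1' : Tendsto (fun k => ψ (1 / c k) (y k)) atTop (𝓝 (φ 1 x)) :=
    lim1.congr key
  exact hx1 (tendsto_nhds_unique lim1' lim2)

set_option maxHeartbeats 800000 in
lemma sub_lin (hφ : IsFlow φ) (hψ : IsFlow ψ) {x : M}
    (hx : ¬ IsEquilibrium φ x ∧ ¬ IsPeriodicPoint φ x)
    {y : ℕ → M} {c : ℕ → ℝ} (hy : Tendsto y atTop (𝓝 x)) (hc : ∀ n, Lin φ ψ (y n) (c n)) :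
    ∃ c₀ : ℝ, Lin φ ψ x c₀ ∧ ∃ ms : ℕ → ℕ, Tendsto (fun k => c (ms k)) atTop (𝓝 c₀) := by
  obtain ⟨ε, hε, C, hC⟩ := bound_near hφ hψ (not_fix_one hφ hx)
  have hev : ∀ᶠ n in atTop, dist (y n) x ≤ ε := by
    have h := hy.eventually_mem (Metric.closedBall_mem_nhds x hε)
    filter_upwards [h] with n hn
    exact Metric.mem_closedBall.1 hn
  obtain ⟨N, hN⟩ := eventually_atTop.1 hev
  have hbdd : ∀ k, c (k + N) ∈ Icc (-C) C := by
    intro k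
    have h := hC (y (k+N)) (c (k+N)) (hN (k+N) (by omega)) (hc (k+N))
    rw [abs_le] at h
    exact ⟨h.1, h.2⟩
  obtain ⟨c₀, -, g, hg, hcg⟩ := tendsto_subseq_of_bounded (Metric.isBounded_Icc (-C) C) hbdd
  have hcg' : Tendsto (fun k => c (g k + N)) atTop (𝓝 c₀) := hcg
  refine ⟨c₀, ?_, fun k => g k + N, hcg'⟩
  intro s
  have hidx : Tendsto (fun k : ℕ => g k + N) atTop atTop :=
    (tendsto_add_atTop_nat N).comp hg.tendsto_atTop
  have hz : Tendsto (fun k => y (g k + N)) atTop (𝓝 x) := hy.comp hidx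
  have l1 : Tendsto (fun k => ψ s (y (g k + N))) atTop (𝓝 (ψ s x)) :=
    ((cont_x hψ s).tendsto x).comp hz
  have l2 : Tendsto (fun k => φ (c (g k + N) * s) (y (g k + N))) atTop (𝓝 (φ (c₀ * s) x)) := by
    have hp : Tendsto (fun k => ((c (g k + N) * s : ℝ), y (g k + N))) atTop
        (𝓝 ((c₀ * s : ℝ), x)) := (hcg'.mul_const s).prodMk_nhds hz
    exact (hφ.1.tendsto ((c₀ * s : ℝ), x)).comp hp
  have l2' : Tendsto (fun k => ψ s (y (g k + N))) atTop (𝓝 (φ (c₀ * s) x)) := by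
    apply l2.congr
    intro k
    exact (hc (g k + N) s).symm
  exact tendsto_nhds_unique l1 l2'

end ThmB

open ThmB in
/-- Under the hypotheses of Theorem B, every continuous flow `(Y_s)_s` commuting with
`(X_t)_t` is a linear orbital reparametrization of `(X_t)_t` on
`M₀ = M ∖ (𝓔 ∪ 𝓟)`: there is a continuous map `h : M₀ → ℝ`, constant along orbits of
`(X_t)_t`, with `Y_t(x) = X_{h(x)·t}(x)` for all `x ∈ M₀` and all `t ∈ ℝ`. -/
theorem exists_continuous_linear_reparametrization
    [CompactSpace M] [ConnectedSpace M]
    (φ : ℝ → M → M) (hφ : IsFlow φ)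
    (h1 : {p : M | IsEquilibrium φ p}.Finite)
    (h2 : Dense {p : M | IsPeriodicPoint φ p})
    (h3 : IsTransitiveFlow φ)
    (h4 : FinitelyManyShortPeriodicOrbits φ)
    (ψ : ℝ → M → M) (hψ : IsFlow ψ) (hcomm : FlowsCommute φ ψ) :
    ∃ h : M → ℝ,
      ContinuousOn h {x : M | ¬ IsEquilibrium φ x ∧ ¬ IsPeriodicPoint φ x} ∧
      (∀ x ∈ {x : M | ¬ IsEquilibrium φ x ∧ ¬ IsPeriodicPoint φ x},
        ∀ t : ℝ, h (φ t x) = h x) ∧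
      (∀ x ∈ {x : M | ¬ IsEquilibrium φ x ∧ ¬ IsPeriodicPoint φ x},
        ∀ t : ℝ, ψ t x = φ (h x * t) x) := by
  classical
  have hS : ∀ x : M, (¬ IsEquilibrium φ x ∧ ¬ IsPeriodicPoint φ x) → ∃ c : ℝ, Lin φ ψ x c := by
    intro x hx
    obtain ⟨y, hyP, hy⟩ := mem_closure_iff_seq_limit.1 (h2 x)
    have hlin : ∀ n, ∃ c, Lin φ ψ (y n) c :=
      fun n => periodic_linear hφ hψ hcomm h4 (hyP n)
    choose cs hcs using hlin
    obtain ⟨c₀, hc₀, -⟩ := sub_lin hφ hψ hx hy hcs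
    exact ⟨c₀, hc₀⟩
  set h : M → ℝ := fun x =>
    if hx : (¬ IsEquilibrium φ x ∧ ¬ IsPeriodicPoint φ x) then (hS x hx).choose else 0
    with hdef
  have hLin : ∀ x, ∀ hx : (¬ IsEquilibrium φ x ∧ ¬ IsPeriodicPoint φ x), Lin φ ψ x (h x) := by
    intro x hx
    rw [hdef]
    simp only [dif_pos hx]
    exact (hS x hx).choose_spec
  refine ⟨h, ?_, ?_, ?_⟩
  · -- continuity on M₀
    intro x hx
    have hx' : ¬ IsEquilibrium φ x ∧ ¬ IsPeriodicPoint φ x := hx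
    show Tendsto h (𝓝[{x : M | ¬ IsEquilibrium φ x ∧ ¬ IsPeriodicPoint φ x}] x) (𝓝 (h x))
    rw [tendsto_iff_seq_tendsto]
    intro u hu
    have huS : ∀ᶠ n in atTop, (¬ IsEquilibrium φ (u n) ∧ ¬ IsPeriodicPoint φ (u n)) :=
      hu.eventually eventually_mem_nhdsWithin
    have hux : Tendsto u atTop (𝓝 x) := hu.mono_right nhdsWithin_le_nhds
    obtain ⟨N, hN⟩ := eventually_atTop.1 huS
    have hseq : Tendsto (fun k : ℕ => u (k + N)) atTop (𝓝 x) :=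
      hux.comp (tendsto_add_atTop_nat N)
    have hcs : ∀ k : ℕ, Lin φ ψ (u (k + N)) (h (u (k + N))) :=
      fun k => hLin _ (hN (k+N) (by omega))
    have hmain : Tendsto (fun k : ℕ => h (u (k + N))) atTop (𝓝 (h x)) := by
      apply tendsto_of_subseq_tendsto
      intro ns hns
      obtain ⟨c₁, hc₁, ms, hms⟩ := sub_lin hφ hψ hx' (hseq.comp hns) (fun k => hcs (ns k))
      have hceq : c₁ = h x := lin_unique hφ hx' hc₁ (hLin x hx')
      exact ⟨ms, by rwa [hceq] at hms⟩
    exact (tendsto_add_atTop_iff_nat N).1 hmain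
  · -- invariance along orbits
    intro x hx t
    have hx' : ¬ IsEquilibrium φ x ∧ ¬ IsPeriodicPoint φ x := hx
    have hxt : ¬ IsEquilibrium φ (φ t x) ∧ ¬ IsPeriodicPoint φ (φ t x) :=
      ⟨fun he => hx'.1 (equil_of_shift hφ he), fun hp => hx'.2 (periodic_of_shift hφ hp)⟩
    have hlin2 : Lin φ ψ (φ t x) (h x) := by
      intro s
      calc ψ s (φ t x) = φ t (ψ s x) := hcomm s t x
        _ = φ t (φ (h x * s) x) := by rw [hLin x hx' s]
        _ = φ (h x * s) (φ t x) := by rw [← hφ.2.2, add_comm, hφ.2.2]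
    exact lin_unique hφ hxt (hLin _ hxt) hlin2
  · intro x hx t
    exact hLin x hx t
end
end
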